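/- Let d and L be positive integers. For each t ∈ {0,…,L−1}, let W_t be a real d×d matrix, let A_t be a real d×d diagonal matrix with diagonal entries in {0,1}, set f_t(x) = A_t·W_t·x, and let Q_t : ℝᵈ → ℝᵈ be continuously differentiable. Suppose there exist reals q_t ≥ 0 and r ≥ 0 such that for every t and every x ∈ ℝᵈ: (i) every component of Q_t(f_t(x)) has absolute value at most q_t, and (ii) the linear map h ↦ f_t(x) ⊙ (D(Q_t∘f_t)(x)·h) has Euclidean operator norm at most r·‖W_t‖₂, where ⊙ is componentwise multiplication. Define two trajectories by x_{t+1} = x_t + f_t(x_t) ⊙ Q_t(f_t(x_t)) and x^ε_{t+1} = x^ε_t + f_t(x^ε_t) ⊙ Q_t(f_t(x^ε_t)) for t = 0,…,L−1. Then ‖x^ε_L − x_L‖₂ ≤ ‖x^ε_0 − x_0‖₂ · Π_{t=0}^{L−1} (1 + (q_t + r)·‖W_t‖₂). -/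

import Mathlib

/-!
Each layer `z ↦ z + T z ⊙ g z`, with `T` linear, has derivative
`h ↦ h + T z ⊙ Dg(z) h + T h ⊙ g z`. The second term is bounded by `r ‖W‖ ‖h‖` by hypothesis,
and the third by `q ‖W‖ ‖h‖`, because multiplying componentwise by a vector is a diagonal
operator whose `ℓ²` operator norm is the sup norm of that vector, and the 0/1 mask does not
increase `‖W‖`. The mean value inequality makes each layer `(1 + (q + r)‖W‖)`-Lipschitz, and
the bound on the whole network is the product of the per-layer constants.
-/

/-- Componentwise (Hadamard) product of two vectors in Euclidean space. -/
noncomputable def hadamardVec {d : ℕ} (x y : EuclideanSpace ℝ (Fin d)) :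
    EuclideanSpace ℝ (Fin d) :=
  (WithLp.equiv 2 (Fin d → ℝ)).symm fun i => x i * y i

open Matrix WithLp Finset

open scoped Matrix.Norms.L2Operator

section Hadamard

variable {d : ℕ}

@[simp]
theorem hadamardVec_apply (x y : EuclideanSpace ℝ (Fin d)) (i : Fin d) :
    hadamardVec x y i = x i * y i := rfl

theorem hadamardVec_comm (x y : EuclideanSpace ℝ (Fin d)) : hadamardVec x y = hadamardVec y x := by
  ext i; simp [mul_comm]

theorem hadamardVec_eq_toEuclideanCLM_diagonal (x y : EuclideanSpace ℝ (Fin d)) :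
    hadamardVec x y = toEuclideanCLM (𝕜 := ℝ) (diagonal (ofLp x)) y := by
  ext i; simp [mulVec_diagonal]

theorem norm_toEuclideanCLM_diagonal (a : Fin d → ℝ) :
    ‖toEuclideanCLM (𝕜 := ℝ) (diagonal a)‖ = ‖a‖ :=
  l2_opNorm_diagonal a

theorem norm_hadamardVec_le (x y : EuclideanSpace ℝ (Fin d)) :
    ‖hadamardVec x y‖ ≤ ‖ofLp x‖ * ‖y‖ := by
  rw [hadamardVec_eq_toEuclideanCLM_diagonal, ← norm_toEuclideanCLM_diagonal]
  exact ContinuousLinearMap.le_opNorm _ _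

theorem norm_ofLp_le (x : EuclideanSpace ℝ (Fin d)) : ‖ofLp x‖ ≤ ‖x‖ :=
  (pi_norm_le_iff_of_nonneg (norm_nonneg x)).2 (PiLp.norm_apply_le x)

variable (d) in
noncomputable def hadamardCLM :
    EuclideanSpace ℝ (Fin d) →L[ℝ] EuclideanSpace ℝ (Fin d) →L[ℝ] EuclideanSpace ℝ (Fin d) :=
  LinearMap.mkContinuous₂
    (LinearMap.mk₂ ℝ hadamardVec
      (fun x x' y => by ext i; simp [add_mul])
      (fun c x y => by ext i; simp [mul_assoc])
      (fun x y y' => by ext i; simp [mul_add])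
      (fun c x y => by ext i; simp [mul_left_comm]))
    1
    (fun x y => by
      rw [one_mul]
      exact (norm_hadamardVec_le x y).trans (by gcongr; exact norm_ofLp_le x))

theorem norm_toEuclideanCLM_diagonal_mul_le (a : Fin d → ℝ) (W : Matrix (Fin d) (Fin d) ℝ) :
    ‖toEuclideanCLM (𝕜 := ℝ) (diagonal a * W)‖ ≤ ‖a‖ * ‖toEuclideanCLM (𝕜 := ℝ) W‖ := by
  rw [map_mul, ← norm_toEuclideanCLM_diagonal]
  exact norm_mul_le _ _

end Hadamard

section ResidualLayer

variable {d : ℕ} {T : EuclideanSpace ℝ (Fin d) →L[ℝ] EuclideanSpace ℝ (Fin d)}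
  {g : EuclideanSpace ℝ (Fin d) → EuclideanSpace ℝ (Fin d)}

theorem hasFDerivAt_add_hadamardVec (hg : Differentiable ℝ g) (z : EuclideanSpace ℝ (Fin d)) :
    HasFDerivAt (fun y => y + hadamardVec (T y) (g y))
      (ContinuousLinearMap.id ℝ _ +
        ((hadamardCLM d (T z)).comp (fderiv ℝ g z) + ((hadamardCLM d).comp T).flip (g z))) z :=
  (hasFDerivAt_id z).add (((hadamardCLM d).comp T).hasFDerivAt.clm_apply (hg z).hasFDerivAt)

theorem norm_add_hadamardVec_sub_le (hg : Differentiable ℝ g) {C q s : ℝ} (hT : ‖T‖ ≤ C)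
    (hq : ∀ z, ‖ofLp (g z)‖ ≤ q) (hs : 0 ≤ s)
    (hdg : ∀ z h, ‖hadamardVec (T z) (fderiv ℝ g z h)‖ ≤ s * ‖h‖)
    (u v : EuclideanSpace ℝ (Fin d)) :
    ‖(v + hadamardVec (T v) (g v)) - (u + hadamardVec (T u) (g u))‖ ≤
      (1 + q * C + s) * ‖v - u‖ := by
  have hC : 0 ≤ C := (norm_nonneg T).trans hT
  have hq0 : 0 ≤ q := (norm_nonneg _).trans (hq u)
  have hderiv_le : ∀ z, ‖ContinuousLinearMap.id ℝ _ +
      ((hadamardCLM d (T z)).comp (fderiv ℝ g z) + ((hadamardCLM d).comp T).flip (g z))‖ ≤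
      1 + q * C + s := by
    intro z
    refine ContinuousLinearMap.opNorm_le_bound _ (by positivity) fun h => ?_
    have hTg : ‖hadamardVec (T h) (g z)‖ ≤ q * C * ‖h‖ :=
      calc ‖hadamardVec (T h) (g z)‖ ≤ ‖ofLp (g z)‖ * ‖T h‖ := by
            rw [hadamardVec_comm]; exact norm_hadamardVec_le _ _
        _ ≤ q * (C * ‖h‖) := by gcongr; exacts [hq z, T.le_of_opNorm_le hT h]
        _ = q * C * ‖h‖ := by ring
    calc ‖h + (hadamardVec (T z) (fderiv ℝ g z h) + hadamardVec (T h) (g z))‖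
        ≤ ‖h‖ + (‖hadamardVec (T z) (fderiv ℝ g z h)‖ + ‖hadamardVec (T h) (g z)‖) :=
          (norm_add_le _ _).trans (by gcongr; exact norm_add_le _ _)
      _ ≤ ‖h‖ + (s * ‖h‖ + q * C * ‖h‖) := by gcongr; exact hdg z h
      _ = (1 + q * C + s) * ‖h‖ := by ring
  exact convex_univ.norm_image_sub_le_of_norm_hasFDerivWithin_le
    (fun z _ => (hasFDerivAt_add_hadamardVec hg z).hasFDerivWithinAt)
    (fun z _ => hderiv_le z) (Set.mem_univ u) (Set.mem_univ v)

end ResidualLayer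

theorem le_mul_prod_of_le_mul_succ {e K : ℕ → ℝ} {L : ℕ} (hK : ∀ t < L, 0 ≤ K t)
    (he : ∀ t < L, e (t + 1) ≤ K t * e t) : e L ≤ e 0 * ∏ t ∈ range L, K t := by
  induction L with
  | zero => simp
  | succ n ih =>
    calc e (n + 1) ≤ K n * e n := he n n.lt_succ_self
      _ ≤ K n * (e 0 * ∏ t ∈ range n, K t) := by
          gcongr
          · exact hK n n.lt_succ_self
          · exact ih (fun t ht => hK t (ht.trans n.lt_succ_self))
              (fun t ht => he t (ht.trans n.lt_succ_self))
      _ = e 0 * ∏ t ∈ range (n + 1), K t := by rw [prod_range_succ]; ring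

theorem attention_noise_regulator_multilayer_general (d L : ℕ)
    (W : ℕ → Matrix (Fin d) (Fin d) ℝ)
    (a : ℕ → Fin d → ℝ) (ha : ∀ t < L, ∀ i, a t i = 0 ∨ a t i = 1)
    (f : ℕ → EuclideanSpace ℝ (Fin d) → EuclideanSpace ℝ (Fin d))
    (hfdef : ∀ t < L, ∀ x, f t x =
      Matrix.toEuclideanCLM (𝕜 := ℝ) (Matrix.diagonal (a t) * W t) x)
    (Q : ℕ → EuclideanSpace ℝ (Fin d) → EuclideanSpace ℝ (Fin d))
    (hQsmooth : ∀ t < L, ContDiff ℝ 1 (Q t))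
    (q : ℕ → ℝ) (r : ℝ) (hq : ∀ t < L, 0 ≤ q t) (hr : 0 ≤ r)
    (hbound : ∀ t < L, ∀ (x : EuclideanSpace ℝ (Fin d)) (i : Fin d),
      |Q t (f t x) i| ≤ q t)
    (hderiv : ∀ t < L, ∀ (x h : EuclideanSpace ℝ (Fin d)),
      ‖hadamardVec (f t x) (fderiv ℝ (Q t ∘ f t) x h)‖ ≤
        r * ‖Matrix.toEuclideanCLM (𝕜 := ℝ) (W t)‖ * ‖h‖)
    (x xε : ℕ → EuclideanSpace ℝ (Fin d))
    (hx : ∀ t < L, x (t + 1) = x t + hadamardVec (f t (x t)) (Q t (f t (x t))))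
    (hxε : ∀ t < L,
      xε (t + 1) = xε t + hadamardVec (f t (xε t)) (Q t (f t (xε t)))) :
    ‖xε L - x L‖ ≤
      ‖xε 0 - x 0‖ *
        ∏ t ∈ Finset.range L,
          (1 + (q t + r) * ‖Matrix.toEuclideanCLM (𝕜 := ℝ) (W t)‖) := by
  refine le_mul_prod_of_le_mul_succ (e := fun t => ‖xε t - x t‖)
    (fun t ht => by have := hq t ht; positivity) fun t ht => ?_
  set T := toEuclideanCLM (𝕜 := ℝ) (diagonal (a t) * W t)
  have hf : f t = T := funext (hfdef t ht)
  have hmask : ‖a t‖ ≤ 1 := (pi_norm_le_iff_of_nonneg zero_le_one).2 fun i => by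
    rcases ha t ht i with h | h <;> simp [h]
  have hT : ‖T‖ ≤ ‖toEuclideanCLM (𝕜 := ℝ) (W t)‖ :=
    (norm_toEuclideanCLM_diagonal_mul_le _ _).trans (mul_le_of_le_one_left (norm_nonneg _) hmask)
  have hQ : ∀ z, ‖ofLp (Q t (T z))‖ ≤ q t := fun z =>
    (pi_norm_le_iff_of_nonneg (hq t ht)).2 fun i => by
      simpa [← hf, Real.norm_eq_abs] using hbound t ht z i
  have hdQ := hderiv t ht
  rw [hf] at hdQ
  simp only [hx t ht, hxε t ht, hf]
  calc _ ≤ (1 + q t * ‖toEuclideanCLM (𝕜 := ℝ) (W t)‖ + r * ‖toEuclideanCLM (𝕜 := ℝ) (W t)‖) *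
        ‖xε t - x t‖ :=
      norm_add_hadamardVec_sub_le (g := Q t ∘ T)
        (((hQsmooth t ht).differentiable one_ne_zero).comp T.differentiable) hT hQ
        (by positivity) hdQ _ _
    _ = _ := by ring

/-- Multi-layer perturbation bound Eq. (bound1): iterating the per-layer
Lipschitz estimate over an `L`-layer residual network with multiplicative
self-attention, an initial perturbation is amplified by at most
`Π_{t=0}^{L−1} (1 + (q_t + r)·‖W_t‖₂)`. -/
theorem attention_noise_regulator_multilayer (d L : ℕ) (hd : 0 < d) (hL : 0 < L)
    (W : ℕ → Matrix (Fin d) (Fin d) ℝ)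
    (a : ℕ → Fin d → ℝ) (ha : ∀ t < L, ∀ i, a t i = 0 ∨ a t i = 1)
    (f : ℕ → EuclideanSpace ℝ (Fin d) → EuclideanSpace ℝ (Fin d))
    (hfdef : ∀ t < L, ∀ x, f t x =
      Matrix.toEuclideanCLM (𝕜 := ℝ) (Matrix.diagonal (a t) * W t) x)
    (Q : ℕ → EuclideanSpace ℝ (Fin d) → EuclideanSpace ℝ (Fin d))
    (hQsmooth : ∀ t < L, ContDiff ℝ 1 (Q t))
    (q : ℕ → ℝ) (r : ℝ) (hq : ∀ t < L, 0 ≤ q t) (hr : 0 ≤ r)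
    (hbound : ∀ t < L, ∀ (x : EuclideanSpace ℝ (Fin d)) (i : Fin d),
      |Q t (f t x) i| ≤ q t)
    (hderiv : ∀ t < L, ∀ (x h : EuclideanSpace ℝ (Fin d)),
      ‖hadamardVec (f t x) (fderiv ℝ (Q t ∘ f t) x h)‖ ≤
        r * ‖Matrix.toEuclideanCLM (𝕜 := ℝ) (W t)‖ * ‖h‖)
    (x xε : ℕ → EuclideanSpace ℝ (Fin d))
    (hx : ∀ t < L, x (t + 1) = x t + hadamardVec (f t (x t)) (Q t (f t (x t))))
    (hxε : ∀ t < L,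
      xε (t + 1) = xε t + hadamardVec (f t (xε t)) (Q t (f t (xε t)))) :
    ‖xε L - x L‖ ≤
      ‖xε 0 - x 0‖ *
        ∏ t ∈ Finset.range L,
          (1 + (q t + r) * ‖Matrix.toEuclideanCLM (𝕜 := ℝ) (W t)‖) :=
  attention_noise_regulator_multilayer_general d L W a ha f hfdef Q hQsmooth q r hq hr hbound hderiv
    x xε hx hxε
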